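/- arXiv:1807.06867 — 3 statements merged into one kernel-verified Lean document; each statement's English description precedes it below -/
import Mathlib

section
/- Let G = (V,E) be a finite simple graph, let k ≥ 3 be an odd integer, let w : E → ℤ assign a positive integer weight to each edge, and let x̂ : E → ℝ satisfy 0 ≤ x̂(e) ≤ 1 for all e ∈ E and Σ_{e ∈ E(C)} x̂(e) ≥ 1 for every k-cycle C of G. Then there exists a k-cycle covering A ⊆ E of G with Σ_{e ∈ A} w(e) ≤ (k − 1/2) · Σ_{e ∈ E} w(e)·x̂(e). In particular, the minimum weight τ_k(G_w) of a k-cycle covering is at most (k − 1/2) times the optimal value of the fractional k-cycle covering LP. -/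
open Finset SimpleGraph
open scoped Classical

/-! Put `K = 2k - 1`. Every edge with `K x̂ ≥ 2` goes into the cover. If a `k`-cycle avoids
these, all its edges have `K x̂ < 2`, so feasibility forces `K x̂ ≥ 1` on each of them. Among
the edges with `1 ≤ K x̂ < 2` delete those inside one side of a bipartition of `V`; averaging
over all bipartitions, some deletes at most half of their weight. A cycle avoiding the
deleted edges alternates sides, impossible for odd length. Both kinds of deleted edges cost
at most `K / 2` times their LP contribution, and `K / 2 = k - 1/2`. -/

theorem Finset.sum_le_add_card_sub_one_nsmul {ι M : Type*} [AddCommMonoid M] [PartialOrder M]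
    [IsOrderedAddMonoid M] {s : Finset ι} {f : ι → M} {a : ι} {b : M} (ha : a ∈ s)
    (h : ∀ i ∈ s, f i ≤ b) : ∑ i ∈ s, f i ≤ f a + (#s - 1) • b := by
  rw [← add_sum_erase s f ha, ← card_erase_of_mem ha]
  gcongr
  exact sum_le_card_nsmul _ _ _ fun i hi => h i (mem_of_mem_erase hi)

theorem Sym2.card_filter_isDiag_map_eq {V : Type*} [Fintype V] {e : Sym2 V}
    (he : ¬e.IsDiag) :
    #{f : V → Bool | (e.map f).IsDiag} = #{f : V → Bool | ¬(e.map f).IsDiag} := by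
  induction e using Sym2.ind with
  | _ u v =>
    have huv : v ≠ u := fun h => he (by simp [h])
    let flip : (V → Bool) → (V → Bool) := fun f => Function.update f u (!f u)
    have flip_flip : ∀ f, flip (flip f) = f := fun f => by simp [flip]
    refine card_nbij' flip flip ?_ ?_ (fun f _ => flip_flip f) (fun f _ => flip_flip f) <;>
      intro f <;> cases hu : f u <;> cases hv : f v <;> simp [flip, huv, hu, hv]

theorem exists_two_mul_sum_filter_isDiag_map_le {V : Type*} [Fintype V]
    (s : Finset (Sym2 V)) (w : Sym2 V → ℝ) (hs : ∀ e ∈ s, ¬e.IsDiag) :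
    ∃ f : V → Bool, 2 * ∑ e ∈ s with (e.map f).IsDiag, w e ≤ ∑ e ∈ s, w e := by
  have hcount : ∑ f : V → Bool, ∑ e ∈ s with (e.map f).IsDiag, w e
      = ∑ f : V → Bool, ∑ e ∈ s with ¬(e.map f).IsDiag, w e := by
    simp only [sum_filter]
    rw [sum_comm, sum_comm (s := univ)]
    refine sum_congr rfl fun e he => ?_
    rw [← sum_filter, ← sum_filter, sum_const, sum_const,
      Sym2.card_filter_isDiag_map_eq (hs e he)]
  obtain ⟨f, -, hf⟩ := exists_le_of_sum_le univ_nonempty hcount.le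
  refine ⟨f, ?_⟩
  linarith [sum_filter_add_sum_filter_not s (fun e => (e.map f).IsDiag) w]


namespace SimpleGraph.Walk

variable {V : Type*} {G : SimpleGraph V}

theorem even_length_of_forall_not_isDiag_map {u : V} (p : G.Walk u u) (f : V → Bool)
    (hp : ∀ e ∈ p.edges, ¬(e.map f).IsDiag) : Even p.length := by
  let q := p.transfer ((⊤ : SimpleGraph Bool).comap f) fun e he => by
    induction e using Sym2.ind with
    | _ a b => simpa using hp _ he
  let c : ((⊤ : SimpleGraph Bool).comap f).Coloring Bool := Coloring.mk f fun h => h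
  simpa [q] using (c.even_length_iff_congr q).2 Iff.rfl

theorem IsTrail.exists_mem_edges_of_odd_length [DecidableEq V] {u : V} {p : G.Walk u u}
    (hp : p.IsTrail) (hodd : Odd p.length) (x : Sym2 V → ℝ)
    (hx : 1 ≤ ∑ e ∈ p.edges.toFinset, x e) (f : V → Bool) :
    ∃ e ∈ p.edges, 2 ≤ (2 * p.length - 1) * x e ∨
      (1 ≤ (2 * p.length - 1) * x e ∧ (2 * p.length - 1) * x e < 2) ∧ (e.map f).IsDiag := by
  set K : ℝ := 2 * p.length - 1
  have hK : 1 ≤ K := by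
    have : (1 : ℝ) ≤ p.length := by exact_mod_cast hodd.pos
    linarith
  by_contra! hlight
  have hcard : #p.edges.toFinset = p.length := by
    rw [List.toFinset_card_of_nodup hp.edges_nodup, length_edges]
  have hmiddle : ∀ e ∈ p.edges, 1 ≤ K * x e := fun e he => by
    have hsum := sum_le_add_card_sub_one_nsmul (List.mem_toFinset.2 he) fun i hi =>
      (hlight i (List.mem_toFinset.1 hi)).1.le
    rw [← mul_sum, hcard, nsmul_eq_mul, Nat.cast_pred hodd.pos] at hsum
    nlinarith
  refine (Nat.not_even_iff_odd.2 hodd) (p.even_length_of_forall_not_isDiag_map f fun e he => ?_)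
  exact (hlight e he).2 ⟨hmiddle e he, (hlight e he).1⟩

end SimpleGraph.Walk

theorem sum_filter_add_half_sum_filter_le_mul_sum {ι : Type*} (s : Finset ι) (w x : ι → ℝ)
    {K : ℝ} (hK : 0 ≤ K) (hw : ∀ i ∈ s, 0 ≤ w i) (hx : ∀ i ∈ s, 0 ≤ x i) :
    ∑ i ∈ s with 2 ≤ K * x i, w i + (∑ i ∈ s with 1 ≤ K * x i ∧ K * x i < 2, w i) / 2
      ≤ K / 2 * ∑ i ∈ s, w i * x i := by
  rw [sum_filter, sum_filter, sum_div, mul_sum, ← sum_add_distrib]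
  refine sum_le_sum fun i hi => ?_
  have := mul_nonneg (hw i hi) (hx i hi)
  split_ifs <;> nlinarith [hw i hi]

theorem kCycleCover_odd_approx_general {V : Type*} [Fintype V] [DecidableEq V]
    (G : SimpleGraph V) [DecidableRel G.Adj]
    (k : ℕ) (hodd : Odd k)
    (w : Sym2 V → ℤ) (hw : ∀ e ∈ G.edgeSet, 0 < w e)
    (xh : Sym2 V → ℝ)
    (hx0 : ∀ e ∈ G.edgeSet, 0 ≤ xh e)
    (hfeas : ∀ (u : V) (c : G.Walk u u), c.IsCycle → c.length = k →
      1 ≤ ∑ e ∈ c.edges.toFinset, xh e) :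
    ∃ A : Finset (Sym2 V), ↑A ⊆ G.edgeSet ∧
      (∀ (u : V) (c : G.Walk u u), c.IsCycle → c.length = k →
        ∃ e ∈ c.edges, e ∈ A) ∧
      ∑ e ∈ A, (w e : ℝ) ≤
        ((k : ℝ) - 1 / 2) * ∑ e ∈ G.edgeFinset, (w e : ℝ) * xh e := by
  set K : ℝ := 2 * k - 1
  set heavy := {e ∈ G.edgeFinset | 2 ≤ K * xh e}
  set middle := {e ∈ G.edgeFinset | 1 ≤ K * xh e ∧ K * xh e < 2}
  obtain ⟨f, hf⟩ := exists_two_mul_sum_filter_isDiag_map_le middle (fun e => (w e : ℝ))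
    fun e he => G.not_isDiag_of_mem_edgeSet (mem_edgeFinset.1 (mem_filter.1 he).1)
  refine ⟨heavy ∪ {e ∈ middle | (e.map f).IsDiag}, ?_, fun u c hc hlen => ?_, ?_⟩
  · exact fun e he => mem_edgeFinset.1 <|
      union_subset (filter_subset _ _) ((filter_subset _ _).trans (filter_subset _ _)) he
  · obtain ⟨e, he, hxe⟩ := hc.isTrail.exists_mem_edges_of_odd_length (hlen ▸ hodd) xh
      (hfeas u c hc hlen) f
    have heG : e ∈ G.edgeFinset := mem_edgeFinset.2 (c.edges_subset_edgeSet he)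
    rw [hlen] at hxe
    refine ⟨e, he, ?_⟩
    simpa only [mem_union, mem_filter, heavy, middle, heG, true_and] using hxe
  · have hK : 0 ≤ K := by
      have : (1 : ℝ) ≤ k := by exact_mod_cast hodd.pos
      linarith
    have hdisj : Disjoint heavy {e ∈ middle | (e.map f).IsDiag} := by
      refine disjoint_left.2 fun e h2 h => ?_
      simp only [mem_filter, heavy, middle] at h2 h
      linarith [h.1.2.2, h2.2]
    calc ∑ e ∈ heavy ∪ {e ∈ middle | (e.map f).IsDiag}, (w e : ℝ)
        ≤ ∑ e ∈ heavy, (w e : ℝ) + (∑ e ∈ middle, (w e : ℝ)) / 2 := by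
          rw [sum_union hdisj]; linarith
      _ ≤ K / 2 * ∑ e ∈ G.edgeFinset, (w e : ℝ) * xh e := by
          refine sum_filter_add_half_sum_filter_le_mul_sum _ _ _ hK (fun e he => ?_)
            fun e he => hx0 e (mem_edgeFinset.1 he)
          exact_mod_cast (hw e (mem_edgeFinset.1 he)).le
      _ = ((k : ℝ) - 1 / 2) * ∑ e ∈ G.edgeFinset, (w e : ℝ) * xh e := by ring

/-- for odd `k ≥ 3`, from any fractional feasible solution `x̂` of the
k-cycle covering LP one obtains a k-cycle covering `A ⊆ E` of weight at most
`(k - 1/2) · Σ_{e ∈ E} w e * x̂ e`.  In particular the minimum weight of a k-cycle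
covering is at most `k - 1/2` times the LP optimum. -/
theorem kCycleCover_odd_approx {V : Type*} [Fintype V] [DecidableEq V]
    (G : SimpleGraph V) [DecidableRel G.Adj]
    (k : ℕ) (hk : 3 ≤ k) (hodd : Odd k)
    (w : Sym2 V → ℤ) (hw : ∀ e ∈ G.edgeSet, 0 < w e)
    (xh : Sym2 V → ℝ)
    (hx0 : ∀ e ∈ G.edgeSet, 0 ≤ xh e) (hx1 : ∀ e ∈ G.edgeSet, xh e ≤ 1)
    (hfeas : ∀ (u : V) (c : G.Walk u u), c.IsCycle → c.length = k →
      1 ≤ ∑ e ∈ c.edges.toFinset, xh e) :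
    ∃ A : Finset (Sym2 V), ↑A ⊆ G.edgeSet ∧
      (∀ (u : V) (c : G.Walk u u), c.IsCycle → c.length = k →
        ∃ e ∈ c.edges, e ∈ A) ∧
      ∑ e ∈ A, (w e : ℝ) ≤
        ((k : ℝ) - 1 / 2) * ∑ e ∈ G.edgeFinset, (w e : ℝ) * xh e :=
  kCycleCover_odd_approx_general G k hodd w hw xh hx0 hfeas
end

section
/- Let G = (V,E) be a finite simple graph, let k ≥ 3 be an integer, let w : E → ℤ assign a positive integer weight to each edge, and let x̂ : E → ℝ satisfy 0 ≤ x̂(e) ≤ 1 for all e ∈ E and Σ_{e ∈ E(K)} x̂(e) ≥ 1 for every k-clique K of G. Then there exists a k-clique covering A ⊆ E of G with Σ_{e ∈ A} w(e) ≤ (C(k,2) − 1/2) · Σ_{e ∈ E} w(e)·x̂(e) = ((k² − k − 1)/2) · Σ_{e ∈ E} w(e)·x̂(e). In particular, the minimum weight τ̃_k(G_w) of a k-clique covering is at most (k² − k − 1)/2 times the optimal value of the fractional k-clique covering LP. -/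
/-!
Scale the fractional solution by `c = C(k,2) - 1/2`. Take every edge with `c·x̂(e) ≥ 1`, and every
edge with `1/2 ≤ c·x̂(e) < 1` that a uniformly random 2-colouring of the vertices makes
monochromatic, which happens with probability `1/2`. Each edge is then taken with probability at
most `c·x̂(e)`, so some colouring yields weight at most `c·Σ w x̂`. Every colouring yields a cover:
in a `k`-clique none of whose edges is taken outright, an edge with `c·x̂(e) < 1/2` would push the
clique's `x̂`-sum below `1/(2c) + (C(k,2) - 1)/c = 1`; so all its edges are candidates, and as
`k ≥ 3` two of its vertices share a colour.
-/

open Finset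
open scoped Classical

/-- The edges of `G` spanned by the vertex set `s` (for a clique `s`, these are
the edges of the clique). -/
noncomputable def cliqueEdges {V : Type*} [Fintype V] [DecidableEq V]
    (G : SimpleGraph V) (s : Finset V) : Finset (Sym2 V) :=
  G.edgeFinset.filter (fun e => ∀ v ∈ e, v ∈ s)

section Rounding

variable {V : Type*}

lemma mem_cliqueEdges [Fintype V] [DecidableEq V] {G : SimpleGraph V} {s : Finset V}
    {e : Sym2 V} : e ∈ cliqueEdges G s ↔ e ∈ G.edgeSet ∧ ∀ v ∈ e, v ∈ s := by
  rw [cliqueEdges, mem_filter, SimpleGraph.mem_edgeFinset]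

lemma card_cliqueEdges_le [Fintype V] [DecidableEq V] (G : SimpleGraph V) (s : Finset V) :
    #(cliqueEdges G s) ≤ (#s).choose 2 := by
  rw [← Sym2.card_image_offDiag]
  refine card_le_card fun e he => ?_
  induction e using Sym2.ind with
  | _ u v =>
    simp only [mem_cliqueEdges, SimpleGraph.mem_edgeSet, Sym2.mem_iff, forall_eq_or_imp,
      forall_eq] at he
    exact mem_image.mpr ⟨(u, v), mem_offDiag.mpr ⟨he.2.1, he.2.2, he.1.ne⟩, rfl⟩

lemma two_mul_card_isDiag_map [Fintype V] [DecidableEq V] {e : Sym2 V} (he : ¬e.IsDiag) :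
    2 * #{f : V → Bool | (e.map f).IsDiag} = Fintype.card (V → Bool) := by
  induction e using Sym2.ind with
  | _ u v =>
    have huv : u ≠ v := by simpa using he
    have hflip : Function.Involutive fun f : V → Bool => Function.update f u (!f u) := by
      intro f; ext a; by_cases ha : a = u <;> simp [ha]
    have hcard : Fintype.card {f : V → Bool // f u = f v} =
        Fintype.card {f : V → Bool // ¬f u = f v} :=
      Fintype.card_congr <| Equiv.subtypeEquiv (hflip.toPerm _) fun f => by
        simp only [Function.Involutive.coe_toPerm, Function.update_self,
          Function.update_of_ne huv.symm]
        cases f u <;> cases f v <;> simp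
    rw [Fintype.card_subtype_compl, Fintype.card_subtype] at hcard
    have := Fintype.card_subtype_le fun f : V → Bool => f u = f v
    simp only [Sym2.map_mk, Sym2.mk_isDiag_iff]
    omega

noncomputable def roundWithColoring (E : Finset (Sym2 V)) (x : Sym2 V → ℝ) (c : ℝ)
    (f : V → Bool) : Finset (Sym2 V) :=
  {e ∈ E | 1 ≤ c * x e ∨ (1 ≤ 2 * (c * x e) ∧ (e.map f).IsDiag)}

lemma card_mem_roundWithColoring_le [Fintype V] [DecidableEq V] {E : Finset (Sym2 V)}
    {x : Sym2 V → ℝ} {c : ℝ} {e : Sym2 V} (he : e ∈ E) (hdiag : ¬e.IsDiag)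
    (hcx : 0 ≤ c * x e) :
    (#{f : V → Bool | e ∈ roundWithColoring E x c f} : ℝ) ≤
      Fintype.card (V → Bool) * (c * x e) := by
  have hN : (0 : ℝ) ≤ Fintype.card (V → Bool) := Nat.cast_nonneg _
  simp only [roundWithColoring, mem_filter, he, true_and]
  by_cases h1 : 1 ≤ c * x e
  · calc (#{f : V → Bool | 1 ≤ c * x e ∨ _} : ℝ) ≤ Fintype.card (V → Bool) := by
          exact_mod_cast card_filter_le _ _
      _ ≤ _ := le_mul_of_one_le_right hN h1
  by_cases h2 : 1 ≤ 2 * (c * x e)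
  · have hhalf : (2 * #{f : V → Bool | (e.map f).IsDiag} : ℝ) = Fintype.card (V → Bool) := by
      exact_mod_cast two_mul_card_isDiag_map hdiag
    simp only [h1, h2, false_or, true_and]
    nlinarith
  · simpa [h1, h2] using hcx

lemma exists_coloring_sum_roundWithColoring_le [Fintype V] [DecidableEq V]
    {E : Finset (Sym2 V)} (hE : ∀ e ∈ E, ¬e.IsDiag) {w x : Sym2 V → ℝ}
    (hw : ∀ e ∈ E, 0 ≤ w e) (hx : ∀ e ∈ E, 0 ≤ x e) {c : ℝ} (hc : 0 ≤ c) :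
    ∃ f : V → Bool, ∑ e ∈ roundWithColoring E x c f, w e ≤ c * ∑ e ∈ E, w e * x e := by
  obtain ⟨f, -, hf⟩ := exists_le_of_sum_le (s := univ) univ_nonempty
    (f := fun f => ∑ e ∈ roundWithColoring E x c f, w e)
    (g := fun _ => c * ∑ e ∈ E, w e * x e) <| calc
    ∑ f, ∑ e ∈ roundWithColoring E x c f, w e
        = ∑ e ∈ E, ∑ f ∈ {f : V → Bool | e ∈ roundWithColoring E x c f}, w e :=
          sum_comm' fun f e => by
            simp only [mem_univ, mem_filter, true_and]
            exact ⟨fun he => ⟨he, (mem_filter.mp he).1⟩, And.left⟩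
    _ = ∑ e ∈ E, #{f : V → Bool | e ∈ roundWithColoring E x c f} * w e := by
          simp only [sum_const, nsmul_eq_mul]
    _ ≤ ∑ e ∈ E, Fintype.card (V → Bool) * (c * x e) * w e :=
          sum_le_sum fun e he => mul_le_mul_of_nonneg_right
            (card_mem_roundWithColoring_le he (hE e he) (mul_nonneg hc (hx e he))) (hw e he)
    _ = ∑ _f : V → Bool, c * ∑ e ∈ E, w e * x e := by
          rw [sum_const, card_univ, nsmul_eq_mul, mul_sum, mul_sum]
          exact sum_congr rfl fun e _ => by ring
  exact ⟨f, hf⟩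

lemma one_le_two_mul_of_forall_lt_one {ι : Type*} {S : Finset ι} {y : ι → ℝ} {c : ℝ}
    (hcard : (#S : ℝ) ≤ c + 1 / 2) (hlt : ∀ i ∈ S, y i < 1) (hsum : c ≤ ∑ i ∈ S, y i) :
    ∀ i ∈ S, 1 ≤ 2 * y i := by
  intro i hi
  by_contra! hyi
  have hrest : ∑ j ∈ S.erase i, y j ≤ #S - 1 := by
    calc ∑ j ∈ S.erase i, y j ≤ #(S.erase i) • (1 : ℝ) :=
          sum_le_card_nsmul _ _ _ fun j hj => (hlt j (mem_of_mem_erase hj)).le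
      _ = #S - 1 := by
          rw [card_erase_of_mem hi, nsmul_one, Nat.cast_sub (card_pos.mpr ⟨i, hi⟩), Nat.cast_one]
  linarith [add_sum_erase S y hi]

lemma exists_mem_cliqueEdges_roundWithColoring [Fintype V] [DecidableEq V]
    {G : SimpleGraph V} [DecidableRel G.Adj] {s : Finset V} (hs : G.IsClique s) (h2 : 2 < #s)
    {x : Sym2 V → ℝ} {c : ℝ} (hc : 0 ≤ c) (hcard : (#(cliqueEdges G s) : ℝ) ≤ c + 1 / 2)
    (hsum : 1 ≤ ∑ e ∈ cliqueEdges G s, x e) (f : V → Bool) :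
    ∃ e ∈ cliqueEdges G s, e ∈ roundWithColoring G.edgeFinset x c f := by
  have hedge : ∀ e ∈ cliqueEdges G s, e ∈ G.edgeFinset := fun e he =>
    SimpleGraph.mem_edgeFinset.mpr (mem_cliqueEdges.mp he).1
  by_cases hbig : ∃ e ∈ cliqueEdges G s, 1 ≤ c * x e
  · obtain ⟨e, he, hcx⟩ := hbig
    exact ⟨e, he, mem_filter.mpr ⟨hedge e he, .inl hcx⟩⟩
  push Not at hbig
  -- No edge of the clique is rounded up outright, so feasibility forces all of them above `1/2`.
  have hhalf := one_le_two_mul_of_forall_lt_one hcard hbig <| by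
    rw [← mul_sum]; exact le_mul_of_one_le_right hc hsum
  obtain ⟨u, hu, v, hv, huv, hfuv⟩ := exists_ne_map_eq_of_card_lt_of_maps_to
    (t := (univ : Finset Bool)) (by simpa using h2) fun a _ => mem_univ (f a)
  have he : s(u, v) ∈ cliqueEdges G s := by
    simp only [mem_cliqueEdges, SimpleGraph.mem_edgeSet, Sym2.mem_iff, forall_eq_or_imp,
      forall_eq]
    exact ⟨hs hu hv huv, hu, hv⟩
  exact ⟨_, he, mem_filter.mpr ⟨hedge _ he, .inr ⟨hhalf _ he, by simp [hfuv]⟩⟩⟩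

end Rounding

theorem kCliqueCover_approx_general {V : Type*} [Fintype V] [DecidableEq V]
    (G : SimpleGraph V) [DecidableRel G.Adj]
    (k : ℕ) (hk : 3 ≤ k)
    (w : Sym2 V → ℤ) (hw : ∀ e ∈ G.edgeSet, 0 < w e)
    (xh : Sym2 V → ℝ)
    (hx0 : ∀ e ∈ G.edgeSet, 0 ≤ xh e)
    (hfeas : ∀ s : Finset V, G.IsNClique k s →
      1 ≤ ∑ e ∈ cliqueEdges G s, xh e) :
    ∃ A : Finset (Sym2 V), ↑A ⊆ G.edgeSet ∧
      (∀ s : Finset V, G.IsNClique k s → ∃ e ∈ cliqueEdges G s, e ∈ A) ∧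
      ∑ e ∈ A, (w e : ℝ) ≤
        (((k : ℝ) ^ 2 - k - 1) / 2) * ∑ e ∈ G.edgeFinset, (w e : ℝ) * xh e := by
  have hc : (0 : ℝ) ≤ ((k : ℝ) ^ 2 - k - 1) / 2 := by
    have : (3 : ℝ) ≤ k := by exact_mod_cast hk
    nlinarith
  obtain ⟨f, hf⟩ := exists_coloring_sum_roundWithColoring_le
    (fun e he => G.not_isDiag_of_mem_edgeSet (SimpleGraph.mem_edgeFinset.mp he))
    (w := fun e => (w e : ℝ))
    (fun e he => by exact_mod_cast (hw e (SimpleGraph.mem_edgeFinset.mp he)).le)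
    (fun e he => hx0 e (SimpleGraph.mem_edgeFinset.mp he)) hc
  refine ⟨roundWithColoring G.edgeFinset xh _ f,
    fun e he => SimpleGraph.mem_edgeFinset.mp (mem_filter.mp he).1, fun s hs => ?_, hf⟩
  refine exists_mem_cliqueEdges_roundWithColoring hs.isClique (by rw [hs.card_eq]; omega) hc ?_
    (hfeas s hs) f
  calc (#(cliqueEdges G s) : ℝ) ≤ (k.choose 2 : ℕ) := by
        exact_mod_cast hs.card_eq ▸ card_cliqueEdges_le G s
    _ = _ := by rw [Nat.cast_choose_two]; ring

/-- from any fractional feasible solution `x̂` of the k-clique covering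
LP one obtains a k-clique covering `A ⊆ E` of weight at most
`(C(k,2) - 1/2) · Σ w e * x̂ e = ((k² - k - 1)/2) · Σ w e * x̂ e`. In particular the
minimum weight of a k-clique covering is at most `(k² - k - 1)/2` times the LP
optimum. -/
theorem kCliqueCover_approx {V : Type*} [Fintype V] [DecidableEq V]
    (G : SimpleGraph V) [DecidableRel G.Adj]
    (k : ℕ) (hk : 3 ≤ k)
    (w : Sym2 V → ℤ) (hw : ∀ e ∈ G.edgeSet, 0 < w e)
    (xh : Sym2 V → ℝ)
    (hx0 : ∀ e ∈ G.edgeSet, 0 ≤ xh e) (hx1 : ∀ e ∈ G.edgeSet, xh e ≤ 1)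
    (hfeas : ∀ s : Finset V, G.IsNClique k s →
      1 ≤ ∑ e ∈ cliqueEdges G s, xh e) :
    ∃ A : Finset (Sym2 V), ↑A ⊆ G.edgeSet ∧
      (∀ s : Finset V, G.IsNClique k s → ∃ e ∈ cliqueEdges G s, e ∈ A) ∧
      ∑ e ∈ A, (w e : ℝ) ≤
        (((k : ℝ) ^ 2 - k - 1) / 2) * ∑ e ∈ G.edgeFinset, (w e : ℝ) * xh e :=
  kCliqueCover_approx_general G k hk w hw xh hx0 hfeas
end

section
/- Let k ≥ 4 be an even integer. Then lim_{n→∞} τ_k(K_n) / C(n,2) = 1, where τ_k(K_n) is the minimum number of edges whose deletion from the complete graph K_n leaves a graph with no k-cycle and C(n,2) = n(n−1)/2. Equivalently, for every ε > 0 there exists N such that for all n ≥ N, τ_k(K_n) ≥ (1 − ε)·C(n,2). -/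
open Finset
open scoped Classical

/-!
If deleting `A` from `K_n` destroys every `k`-cycle, what is left is a `C_k`-free graph, so
`τ_k(K_n) ≥ C(n,2) - ex(n, C_k)`. For `k = 2t` the cycle `C_{2t}` embeds in `K_{t,t}` (alternate
the two sides), and `ex(n, K_{s,t}) = o(n²)` by the Kővári–Sós–Turán double count:
`∑_v C(deg v, t)` counts the pairs (vertex, `t`-set of its neighbours), so once it exceeds
`(s - 1)·C(n, t)` some `t`-set has `s` common neighbours. A graph with more than `c·n` edges has
more than `c` vertices of degree at least `c`, so the sum is at least `c (c + 1 - t)^t / t!`, which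
beats `(s - 1)·C(n, t) ≤ s n^t / t!` when `c = εn/4` and `n` is large.
-/

/-- `τ_k(K_n)`: the minimum number of edges whose deletion from the complete graph
on `n` vertices leaves a graph containing no k-cycle. -/
noncomputable def tauCycleComplete (k n : ℕ) : ℕ :=
  sInf {m | ∃ A : Finset (Sym2 (Fin n)),
    ↑A ⊆ (⊤ : SimpleGraph (Fin n)).edgeSet ∧ A.card = m ∧
    ∀ (u : Fin n) (c : ((⊤ : SimpleGraph (Fin n)).deleteEdges ↑A).Walk u u),
      c.IsCycle → c.length ≠ k}

open Filter Topology

theorem Nat.pow_div_factorial_le_choose_of_le {c : ℝ} {m t : ℕ} (ht : (t : ℝ) ≤ c + 1)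
    (hm : c ≤ m) : (c + 1 - t) ^ t / t.factorial ≤ m.choose t := by
  have htm : t ≤ m + 1 := by
    have : (t : ℝ) ≤ m + 1 := by linarith
    exact_mod_cast this
  refine le_trans ?_ (Nat.pow_le_choose t m)
  rw [Nat.cast_sub htm]
  push_cast
  gcongr

namespace SimpleGraph

theorem cycleGraph_isContained_completeBipartiteGraph (t : ℕ) :
    cycleGraph (2 * t) ⊑ completeBipartiteGraph (Fin t) (Fin t) := by
  have parity_ne {a b : Fin (2 * t)} (h : (a - b).val = 1) : a.val % 2 ≠ b.val % 2 := by
    rcases le_or_gt b a with hba | hab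
    · rw [Fin.coe_sub_iff_le.2 hba] at h; omega
    · rw [Fin.coe_sub_iff_lt.2 hab] at h; omega
  let f : Fin (2 * t) → Fin t ⊕ Fin t := fun i ↦
    if i.val % 2 = 0 then .inl ⟨i / 2, by omega⟩ else .inr ⟨i / 2, by omega⟩
  refine ⟨⟨⟨f, fun {u v} huv ↦ ?_⟩, fun u v (huv : f u = f v) ↦ ?_⟩⟩
  · have : u.val % 2 ≠ v.val % 2 := (cycleGraph_adj'.1 huv).elim parity_ne (parity_ne · |>.symm)
    simp only [f]
    split_ifs <;> simp_all
  · simp only [f] at huv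
    split_ifs at huv <;> simp at huv <;> ext <;> omega

variable {V : Type*} [Fintype V] (G : SimpleGraph V) [DecidableRel G.Adj]

theorem sum_choose_degree_eq_sum_card_filter_subset_neighborFinset (t : ℕ) :
    ∑ v, (G.degree v).choose t =
      ∑ T ∈ powersetCard t (univ : Finset V), #{v | T ⊆ G.neighborFinset v} := by
  have := sum_card_bipartiteAbove_eq_sum_card_bipartiteBelow (s := (univ : Finset V))
    (t := powersetCard t univ) (fun v T ↦ T ⊆ G.neighborFinset v)
  convert this using 2 with v
  · rw [bipartiteAbove, ← card_neighborFinset_eq_degree, ← card_powersetCard]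
    congr 1
    ext T
    simp [and_comm]
  · rfl

theorem completeBipartiteGraph_isContained_of_lt_sum_choose_degree {s t : ℕ}
    (h : (s - 1) * (Fintype.card V).choose t < ∑ v, (G.degree v).choose t) :
    completeBipartiteGraph (Fin s) (Fin t) ⊑ G := by
  rw [sum_choose_degree_eq_sum_card_filter_subset_neighborFinset, ← card_univ,
    ← card_powersetCard, mul_comm, ← smul_eq_mul, ← sum_const] at h
  obtain ⟨T, hT, hs⟩ := exists_lt_of_sum_lt h
  obtain ⟨S, hS, hScard⟩ :=
    exists_subset_card_eq (show s ≤ #{v | T ⊆ G.neighborFinset v} by omega)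
  refine completeBipartiteGraph_isContained_iff.2 ⟨S, T, by simpa using hScard,
    by simpa using (mem_powersetCard.1 hT).2, fun v hv w hw ↦ ?_⟩
  simpa using (mem_filter.1 (hS hv)).2 hw

theorem lt_card_filter_le_degree {c : ℝ} (hc : 0 ≤ c)
    (h : c * Fintype.card V < #G.edgeFinset) : c < #{v | c ≤ G.degree v} := by
  have hhigh : ∑ v ∈ {v | c ≤ G.degree v}, (G.degree v : ℝ) ≤
      #{v | c ≤ G.degree v} * Fintype.card V :=
    (sum_le_card_nsmul _ _ _ fun v _ ↦ mod_cast (G.degree_lt_card_verts v).le).trans_eq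
      (nsmul_eq_mul _ _)
  have hlow : ∑ v ∈ {v | ¬c ≤ G.degree v}, (G.degree v : ℝ) ≤ Fintype.card V * c := by
    refine (sum_le_card_nsmul _ _ c fun v hv ↦ (not_le.1 (mem_filter.1 hv).2).le).trans ?_
    rw [nsmul_eq_mul]
    gcongr
    exact_mod_cast card_le_univ _
  have hsum : (2 * #G.edgeFinset : ℝ) = ∑ v, (G.degree v : ℝ) := by
    exact_mod_cast G.sum_degrees_eq_twice_card_edges.symm
  rw [← sum_filter_add_sum_filter_not univ (fun v ↦ c ≤ G.degree v)] at hsum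
  refine lt_of_mul_lt_mul_right (a := (Fintype.card V : ℝ)) ?_ (by positivity)
  linarith

theorem completeBipartiteGraph_isContained_of_card_edgeFinset {s t : ℕ} {c : ℝ}
    (ht : (t : ℝ) ≤ c) (hs : s * (Fintype.card V : ℝ) ^ t < c * (c + 1 - t) ^ t)
    (hE : c * Fintype.card V < #G.edgeFinset) :
    completeBipartiteGraph (Fin s) (Fin t) ⊑ G := by
  have hW := G.lt_card_filter_le_degree ((Nat.cast_nonneg t).trans ht) hE
  apply completeBipartiteGraph_isContained_of_lt_sum_choose_degree
  suffices ((s - 1 : ℕ) : ℝ) * (Fintype.card V).choose t <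
      ∑ v, ((G.degree v).choose t : ℝ) by
    exact_mod_cast this
  have hct : 0 ≤ c + 1 - t := by linarith
  calc ((s - 1 : ℕ) : ℝ) * (Fintype.card V).choose t
      ≤ s * ((Fintype.card V : ℝ) ^ t / t.factorial) := by
        gcongr
        · exact_mod_cast Nat.sub_le s 1
        · exact Nat.choose_le_pow_div t _
    _ < c * ((c + 1 - t) ^ t / t.factorial) := by
        rw [← mul_div_assoc, ← mul_div_assoc]
        gcongr
    _ ≤ #{v | c ≤ G.degree v} * ((c + 1 - t) ^ t / t.factorial) :=
        mul_le_mul_of_nonneg_right hW.le (by positivity)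
    _ ≤ ∑ v ∈ {v | c ≤ G.degree v}, ((G.degree v).choose t : ℝ) := by
        rw [← nsmul_eq_mul]
        exact card_nsmul_le_sum _ _ _ fun v hv ↦
          Nat.pow_div_factorial_le_choose_of_le (by linarith) (mem_filter.1 hv).2
    _ ≤ ∑ v, ((G.degree v).choose t : ℝ) :=
        sum_le_sum_of_subset_of_nonneg (subset_univ _) fun _ _ _ ↦ by positivity

theorem eventually_extremalNumber_completeBipartiteGraph_le (s t : ℕ) {ε : ℝ} (hε : 0 < ε) :
    ∀ᶠ n : ℕ in atTop,
      (extremalNumber n (completeBipartiteGraph (Fin s) (Fin t)) : ℝ) ≤ ε * n.choose 2 := by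
  have hlin {a : ℝ} (ha : 0 < a) (b : ℝ) : ∀ᶠ n : ℕ in atTop, b < a * n :=
    ((tendsto_natCast_atTop_atTop (R := ℝ)).const_mul_atTop ha).eventually_gt_atTop b
  filter_upwards [hlin (a := ε / 4) (by positivity) (2 * t),
    hlin (a := ε / 4 * (ε / 8) ^ t) (by positivity) s, eventually_ge_atTop 2]
    with n hc hs hn
  have hn' : (2 : ℝ) ≤ n := mod_cast hn
  rw [← Fintype.card_fin n, extremalNumber_le_iff_of_nonneg _ (by positivity)]
  intro G _ hfree
  by_contra! hE
  refine hfree (G.completeBipartiteGraph_isContained_of_card_edgeFinset (c := ε / 4 * n)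
    (by linarith) ?_ ?_)
  · rw [Fintype.card_fin]
    calc (s : ℝ) * n ^ t < ε / 4 * (ε / 8) ^ t * n * n ^ t := by gcongr
      _ = ε / 4 * n * (ε / 8 * n) ^ t := by ring
      _ ≤ ε / 4 * n * (ε / 4 * n + 1 - t) ^ t := by gcongr; linarith
  · refine lt_of_le_of_lt ?_ hE
    rw [Fintype.card_fin, Nat.cast_choose_two]
    nlinarith

theorem tendsto_extremalNumber_completeBipartiteGraph_div_choose_two (s t : ℕ) :
    Tendsto (fun n : ℕ ↦
      (extremalNumber n (completeBipartiteGraph (Fin s) (Fin t)) : ℝ) / n.choose 2)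
      atTop (𝓝 0) := by
  refine tendsto_order.2 ⟨fun a ha ↦ .of_forall fun n ↦ ha.trans_le (by positivity),
    fun a ha ↦ ?_⟩
  filter_upwards [eventually_extremalNumber_completeBipartiteGraph_le s t (half_pos ha),
    eventually_ge_atTop 2] with n hex hn
  have hC : (0 : ℝ) < n.choose 2 := mod_cast Nat.choose_pos hn
  rw [div_lt_iff₀ hC]
  linarith [mul_pos ha hC]

end SimpleGraph

open SimpleGraph

theorem choose_two_mem_tauCycleComplete_set (k n : ℕ) :
    n.choose 2 ∈ {m | ∃ A : Finset (Sym2 (Fin n)),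
      ↑A ⊆ (⊤ : SimpleGraph (Fin n)).edgeSet ∧ A.card = m ∧
      ∀ (u : Fin n) (c : ((⊤ : SimpleGraph (Fin n)).deleteEdges ↑A).Walk u u),
        c.IsCycle → c.length ≠ k} := by
  refine ⟨(⊤ : SimpleGraph (Fin n)).edgeFinset, by simp,
    by rw [card_edgeFinset_top_eq_card_choose_two, Fintype.card_fin], fun u c hc ↦ ?_⟩
  cases c with
  | nil => exact absurd hc Walk.not_isCycle_nil
  | cons h _ => simp at h

theorem tauCycleComplete_le_choose_two (k n : ℕ) : tauCycleComplete k n ≤ n.choose 2 :=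
  Nat.sInf_le (choose_two_mem_tauCycleComplete_set k n)

theorem choose_two_le_tauCycleComplete_add_extremalNumber {k : ℕ} (hk : 3 ≤ k) (n : ℕ) :
    n.choose 2 ≤ tauCycleComplete k n + extremalNumber n (cycleGraph k) := by
  obtain ⟨A, -, hA, hfree⟩ := Nat.sInf_mem ⟨_, choose_two_mem_tauCycleComplete_set k n⟩
  set G := (⊤ : SimpleGraph (Fin n)).deleteEdges ↑A
  have hG : (cycleGraph k).Free G := fun hcyc ↦ by
    obtain ⟨u, c, hc, hlen⟩ := (cycleGraph_isContained_iff hk).1 hcyc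
    exact hfree u c hc hlen
  have hedges : n.choose 2 - #A ≤ #G.edgeFinset := by
    have := le_card_sdiff A (⊤ : SimpleGraph (Fin n)).edgeFinset
    rwa [card_edgeFinset_top_eq_card_choose_two, Fintype.card_fin,
      ← edgeFinset_deleteEdges] at this
  have hex := card_edgeFinset_le_extremalNumber hG
  rw [Fintype.card_fin] at hex
  rw [tauCycleComplete]
  omega

/-- for even `k ≥ 4`, `τ_k(K_n) / C(n,2) → 1` as `n → ∞`. -/
theorem tauCycleComplete_ratio_tendsto_one (k : ℕ) (hk : 4 ≤ k) (heven : Even k) :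
    Filter.Tendsto (fun n : ℕ => (tauCycleComplete k n : ℝ) / (n.choose 2 : ℝ))
      Filter.atTop (nhds 1) := by
  obtain ⟨t, rfl⟩ := even_iff_two_dvd.1 heven
  have hK := tendsto_extremalNumber_completeBipartiteGraph_div_choose_two t t
  refine tendsto_of_tendsto_of_tendsto_of_le_of_le' (by simpa using hK.const_sub 1)
    tendsto_const_nhds ?_ (.of_forall fun n ↦ ?_)
  · filter_upwards [eventually_ge_atTop 2] with n hn
    have hC : (0 : ℝ) < n.choose 2 := mod_cast Nat.choose_pos hn
    have hτ : n.choose 2 ≤ tauCycleComplete (2 * t) n +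
        extremalNumber n (completeBipartiteGraph (Fin t) (Fin t)) :=
      (choose_two_le_tauCycleComplete_add_extremalNumber (by omega) n).trans
        (Nat.add_le_add_left (cycleGraph_isContained_completeBipartiteGraph t).extremalNumber_le _)
    rw [sub_le_iff_le_add, ← add_div, le_div_iff₀ hC, one_mul]
    exact_mod_cast hτ
  · exact div_le_one_of_le₀ (mod_cast tauCycleComplete_le_choose_two _ _) (by positivity)
end
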